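/- Let M₃ be the model with states {s,t}, relation {(s,s),(t,t)}, atom p true exactly at s, and all costs 1, and let M₄ be the model with the single state s, relation {(s,s)}, p true at s, and all costs 1. Then (M₃,s) ⊨ ⟨∠¹⟩X[∠⁰]X¬p and (M₄,s) ⊭ ⟨∠¹⟩X[∠⁰]X¬p. -/

import Mathlib

set_option linter.unusedVariables false

/-! ## Models -/

structure Mdl (S : Type) where
  rel : S → S → Prop
  val : ℕ → Set S
  cost : S → S → ℕ

namespace Mdl
variable {S : Type}

/-- A proper model: serial relation and positive costs. -/
def IsModel (M : Mdl S) : Prop := (∀ s, ∃ t, M.rel s t) ∧ ∀ s t, 0 < M.cost s t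

def Serial (M : Mdl S) : Prop := ∀ s, ∃ t, M.rel s t

def remove (M : Mdl S) (A : Set (S × S)) : Mdl S :=
  { M with rel := fun a b => M.rel a b ∧ (a, b) ∉ A }

def add (M : Mdl S) (A : Set (S × S)) : Mdl S :=
  { M with rel := fun a b => M.rel a b ∨ (a, b) ∈ A }

/-- The set of edges `A` is finite with total cost at most `n`. -/
def costLe (M : Mdl S) (A : Set (S × S)) (n : ℕ) : Prop :=
  ∃ F : Finset (S × S), A = ↑F ∧ ∑ e ∈ F, M.cost e.1 e.2 ≤ n

end Mdl

abbrev PModel (S : Type) := Mdl S × S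
abbrev Strat (S : Type) := PModel S → Set (S × S)
abbrev MPath (S : Type) := ℕ → PModel S

/-- A demonic strategy outputs a subset of the edges of the given model. -/
def IsDemonic {S : Type} (σ : Strat S) : Prop :=
  ∀ Ms : PModel S, σ Ms ⊆ {e : S × S | Ms.1.rel e.1 e.2}

/-- An angelic strategy outputs a set of non-edges of the given model. -/
def IsAngelic {S : Type} (σ : Strat S) : Prop :=
  ∀ Ms : PModel S, σ Ms ⊆ {e : S × S | ¬ Ms.1.rel e.1 e.2}

/-! ### Demonic (SDL) paths -/

def DStep {S : Type} (σ : Strat S) (x y : PModel S) : Prop :=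
  y.1 = x.1.remove (σ x) ∧ y.1.Serial ∧ y.1.rel x.2 y.2

def DCompat {S : Type} (σ : Strat S) (π : MPath S) : Prop := ∀ i, DStep σ (π i) (π (i+1))

/-- `σ` is an `n`-strategy: on every compatible path each removed set has cost at most `n`. -/
def DBound {S : Type} (σ : Strat S) (n : ℕ) : Prop :=
  ∀ π : MPath S, DCompat σ π → ∀ i, (π i).1.costLe (σ (π i)) n

/-! ### Angelic (SCL) paths -/

def AStep {S : Type} (σ : Strat S) (x y : PModel S) : Prop :=
  y.1 = x.1.add (σ x) ∧ y.1.rel x.2 y.2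

def ACompat {S : Type} (σ : Strat S) (π : MPath S) : Prop := ∀ i, AStep σ (π i) (π (i+1))

def ABound {S : Type} (σ : Strat S) (n : ℕ) : Prop :=
  ∀ π : MPath S, ACompat σ π → ∀ i, (π i).1.costLe (σ (π i)) n

/-! ### Update (SUL) paths: angel budget `n`, demon budget `m` -/

def UStep {S : Type} (Sa Sd : Strat S) (n m : ℕ) (x y : PModel S) : Prop :=
  x.1.costLe (Sa x) n ∧ x.1.costLe (Sd x) m ∧
  y.1 = (x.1.remove (Sd x)).add (Sa x) ∧ y.1.Serial ∧ y.1.rel x.2 y.2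

def UCompat {S : Type} (Sa Sd : Strat S) (n m : ℕ) (π : MPath S) : Prop :=
  ∀ i, UStep Sa Sd n m (π i) (π (i+1))

/-! ## SDL -/

mutual
inductive SDLF : Type
  | atom : ℕ → SDLF
  | neg : SDLF → SDLF
  | and : SDLF → SDLF → SDLF
  | dia : ℕ → SDLP → SDLF
inductive SDLP : Type
  | nxt : SDLF → SDLP
  | untl : SDLF → SDLF → SDLP
  | rls : SDLF → SDLF → SDLP
end

mutual
def SDLSat {S : Type} : PModel S → SDLF → Prop
  | Ms, .atom p => Ms.2 ∈ Ms.1.val p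
  | Ms, .neg φ => ¬ SDLSat Ms φ
  | Ms, .and φ χ => SDLSat Ms φ ∧ SDLSat Ms χ
  | Ms, .dia n ψ => ∃ σ : Strat S, IsDemonic σ ∧ DBound σ n ∧
      ∀ π : MPath S, π 0 = Ms → DCompat σ π → SDLPSat π ψ
def SDLPSat {S : Type} : MPath S → SDLP → Prop
  | π, .nxt φ => SDLSat (π 1) φ
  | π, .untl φ χ => ∃ j, SDLSat (π j) χ ∧ ∀ i < j, SDLSat (π i) φ
  | π, .rls φ χ => (∀ j, SDLSat (π j) χ) ∨ ∃ k, SDLSat (π k) φ ∧ ∀ i ≤ k, SDLSat (π i) χ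
end

/-! ## SCL -/

mutual
inductive SCLF : Type
  | atom : ℕ → SCLF
  | neg : SCLF → SCLF
  | and : SCLF → SCLF → SCLF
  | dia : ℕ → SCLP → SCLF
inductive SCLP : Type
  | nxt : SCLF → SCLP
  | untl : SCLF → SCLF → SCLP
  | rls : SCLF → SCLF → SCLP
end

mutual
def SCLSat {S : Type} : PModel S → SCLF → Prop
  | Ms, .atom p => Ms.2 ∈ Ms.1.val p
  | Ms, .neg φ => ¬ SCLSat Ms φ
  | Ms, .and φ χ => SCLSat Ms φ ∧ SCLSat Ms χ
  | Ms, .dia n ψ => ∃ σ : Strat S, IsAngelic σ ∧ ABound σ n ∧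
      ∀ π : MPath S, π 0 = Ms → ACompat σ π → SCLPSat π ψ
def SCLPSat {S : Type} : MPath S → SCLP → Prop
  | π, .nxt φ => SCLSat (π 1) φ
  | π, .untl φ χ => ∃ j, SCLSat (π j) χ ∧ ∀ i < j, SCLSat (π i) φ
  | π, .rls φ χ => (∀ j, SCLSat (π j) χ) ∨ ∃ k, SCLSat (π k) φ ∧ ∀ i ≤ k, SCLSat (π i) χ
end

/-! ## SUL -/

/-- Coalitions `C ⊆ {∠, ★}`. -/
inductive Coal : Type
  | both : Coal
  | onlyAngel : Coal
  | onlyDemon : Coal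
  | neither : Coal

mutual
inductive SULF : Type
  | atom : ℕ → SULF
  | neg : SULF → SULF
  | and : SULF → SULF → SULF
  | strat : Coal → ℕ → ℕ → SULP → SULF
inductive SULP : Type
  | nxt : SULF → SULP
  | untl : SULF → SULF → SULP
  | rls : SULF → SULF → SULP
end

mutual
def SULSat {S : Type} : PModel S → SULF → Prop
  | Ms, .atom p => Ms.2 ∈ Ms.1.val p
  | Ms, .neg φ => ¬ SULSat Ms φ
  | Ms, .and φ χ => SULSat Ms φ ∧ SULSat Ms χ
  | Ms, .strat .both n m ψ =>
      -- ⟨⟨∠ⁿ,★ᵐ⟩⟩ψ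
      ∃ Sa : Strat S, IsAngelic Sa ∧ ∃ Sd : Strat S, IsDemonic Sd ∧
        ∀ π : MPath S, π 0 = Ms → UCompat Sa Sd n m π → SULPSat π ψ
  | Ms, .strat .onlyAngel n m ψ =>
      -- ⟨⟨∠^{n,m}⟩⟩ψ : angel has budget n, demon budget m
      ∃ Sa : Strat S, IsAngelic Sa ∧ ∀ Sd : Strat S, IsDemonic Sd →
        ∀ π : MPath S, π 0 = Ms → UCompat Sa Sd n m π → SULPSat π ψ
  | Ms, .strat .onlyDemon n m ψ =>
      -- ⟨⟨★^{n,m}⟩⟩ψ : demon has budget n, angel budget m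
      ∃ Sd : Strat S, IsDemonic Sd ∧ ∀ Sa : Strat S, IsAngelic Sa →
        ∀ π : MPath S, π 0 = Ms → UCompat Sa Sd m n π → SULPSat π ψ
  | Ms, .strat .neither n m ψ =>
      -- ⟨⟨∅^{n,m}⟩⟩ψ
      ∀ Sa : Strat S, IsAngelic Sa → ∀ Sd : Strat S, IsDemonic Sd →
        ∀ π : MPath S, π 0 = Ms → UCompat Sa Sd n m π → SULPSat π ψ
def SULPSat {S : Type} : MPath S → SULP → Prop
  | π, .nxt φ => SULSat (π 1) φ
  | π, .untl φ χ => ∃ j, SULSat (π j) χ ∧ ∀ i < j, SULSat (π i) φ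
  | π, .rls φ χ => (∀ j, SULSat (π j) χ) ∨ ∃ k, SULSat (π k) φ ∧ ∀ i ≤ k, SULSat (π i) χ
end

/-! ## Obstruction Logic -/

mutual
inductive OLF : Type
  | atom : ℕ → OLF
  | neg : OLF → OLF
  | and : OLF → OLF → OLF
  | dia : ℕ → OLP → OLF
inductive OLP : Type
  | nxt : OLF → OLP
  | untl : OLF → OLF → OLP
  | rls : OLF → OLF → OLP
end

/-- An OL `n`-strategy over the fixed model `M`. -/
def IsOLStrategy {S : Type} (M : Mdl S) (σ : S → Set (S × S)) (n : ℕ) : Prop :=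
  ∀ s, σ s ⊆ {e : S × S | M.rel e.1 e.2} ∧ M.costLe (σ s) n ∧
    ∃ t, M.rel s t ∧ (s, t) ∉ σ s

def OLCompat {S : Type} (M : Mdl S) (σ : S → Set (S × S)) (π : ℕ → S) : Prop :=
  ∀ i, M.rel (π i) (π (i+1)) ∧ (π i, π (i+1)) ∉ σ (π i)

mutual
def OLSat {S : Type} (M : Mdl S) : S → OLF → Prop
  | s, .atom p => s ∈ M.val p
  | s, .neg φ => ¬ OLSat M s φ
  | s, .and φ χ => OLSat M s φ ∧ OLSat M s χ
  | s, .dia n ψ => ∃ σ : S → Set (S × S), IsOLStrategy M σ n ∧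
      ∀ π : ℕ → S, π 0 = s → OLCompat M σ π → OLPSat M π ψ
def OLPSat {S : Type} (M : Mdl S) : (ℕ → S) → OLP → Prop
  | π, .nxt φ => OLSat M (π 1) φ
  | π, .untl φ χ => ∃ j, OLSat M (π j) χ ∧ ∀ i < j, OLSat M (π i) φ
  | π, .rls φ χ => (∀ j, OLSat M (π j) χ) ∨ ∃ k, OLSat M (π k) φ ∧ ∀ i ≤ k, OLSat M (π i) χ
end

/-! ## CTL -/

inductive CTLF : Type
  | atom : ℕ → CTLF
  | neg : CTLF → CTLF
  | and : CTLF → CTLF → CTLF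
  | ax : CTLF → CTLF
  | ex : CTLF → CTLF
  | au : CTLF → CTLF → CTLF
  | ar : CTLF → CTLF → CTLF
  | eu : CTLF → CTLF → CTLF
  | er : CTLF → CTLF → CTLF

def IsPath {S : Type} (M : Mdl S) (π : ℕ → S) : Prop := ∀ i, M.rel (π i) (π (i+1))

def CTLSat {S : Type} (M : Mdl S) : S → CTLF → Prop
  | s, .atom p => s ∈ M.val p
  | s, .neg φ => ¬ CTLSat M s φ
  | s, .and φ χ => CTLSat M s φ ∧ CTLSat M s χ
  | s, .ax φ => ∀ π : ℕ → S, π 0 = s → IsPath M π → CTLSat M (π 1) φ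
  | s, .ex φ => ∃ π : ℕ → S, π 0 = s ∧ IsPath M π ∧ CTLSat M (π 1) φ
  | s, .au φ χ => ∀ π : ℕ → S, π 0 = s → IsPath M π →
      ∃ j, CTLSat M (π j) χ ∧ ∀ i < j, CTLSat M (π i) φ
  | s, .ar φ χ => ∀ π : ℕ → S, π 0 = s → IsPath M π →
      ((∀ j, CTLSat M (π j) χ) ∨ ∃ k, CTLSat M (π k) φ ∧ ∀ i ≤ k, CTLSat M (π i) χ)
  | s, .eu φ χ => ∃ π : ℕ → S, π 0 = s ∧ IsPath M π ∧
      ∃ j, CTLSat M (π j) χ ∧ ∀ i < j, CTLSat M (π i) φ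
  | s, .er φ χ => ∃ π : ℕ → S, π 0 = s ∧ IsPath M π ∧
      ((∀ j, CTLSat M (π j) χ) ∨ ∃ k, CTLSat M (π k) φ ∧ ∀ i ≤ k, CTLSat M (π i) χ)

/-! ## Statement 12 -/

/-- The model `M₃`: states `{s,t}` (encoded as `Bool`, with `s = true` and
`t = false`), relation `{(s,s),(t,t)}`, atom `p` (atom `0`) true exactly at `s`,
and all costs `1`. -/
def M3 : Mdl Bool :=
  { rel := fun a b => a = b
    val := fun q => {x | q = 0 ∧ x = true}
    cost := fun _ _ => 1 }

/-- The model `M₄`: a single state `s`, relation `{(s,s)}`, atom `p` (atom `0`)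
true at `s`, and all costs `1`. -/
def M4 : Mdl Unit :=
  { rel := fun _ _ => True
    val := fun q => {_x | q = 0}
    cost := fun _ _ => 1 }

/-- The SCL formula `⟨∠¹⟩X[∠⁰]X¬p`, where `[∠⁰]X¬p = ¬⟨∠⁰⟩¬(X¬p) = ¬⟨∠⁰⟩Xp`
and `p` is atom `0`. -/
def sclWitness : SCLF :=
  SCLF.dia 1 (SCLP.nxt (SCLF.neg (SCLF.dia 0 (SCLP.nxt (SCLF.atom 0)))))

/-! Adding edges never removes any, so a walk along edges of the initial model is compatible
with every angelic strategy. In `M₃` the angel pays `1` for the edge `s → t`; from then on `t`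
is reachable from both states and is a `¬p`-state with a self-loop, so no strategy forces `p`
at the next step. In `M₄` the atom `p` holds everywhere, so `⟨∠⁰⟩Xp` holds after any
modification, witnessed by the empty strategy. -/

namespace Mdl
variable {S : Type}

@[simp]
theorem add_val (M : Mdl S) (A : Set (S × S)) : (M.add A).val = M.val := rfl

theorem add_rel_of_rel {M : Mdl S} {A : Set (S × S)} {a b : S} (h : M.rel a b) :
    (M.add A).rel a b :=
  Or.inl h

theorem costLe_empty (M : Mdl S) (n : ℕ) : M.costLe ∅ n :=
  ⟨∅, by simp, by simp⟩

theorem costLe_singleton {M : Mdl S} {e : S × S} {n : ℕ} (h : M.cost e.1 e.2 ≤ n) :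
    M.costLe {e} n :=
  ⟨{e}, by simp, by simpa using h⟩

end Mdl

section Paths
variable {S : Type}

def pathTo (σ : Strat S) (x : PModel S) (t : S) : MPath S
  | 0 => x
  | n + 1 => ((pathTo σ x t n).1.add (σ (pathTo σ x t n)), t)

theorem pathTo_rel_of_rel (σ : Strat S) (x : PModel S) (t : S) {a b : S} (h : x.1.rel a b) :
    ∀ n, (pathTo σ x t n).1.rel a b
  | 0 => h
  | n + 1 => Mdl.add_rel_of_rel (pathTo_rel_of_rel σ x t h n)

theorem aCompat_pathTo (σ : Strat S) {x : PModel S} {t : S} (hx : x.1.rel x.2 t)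
    (ht : x.1.rel t t) : ACompat σ (pathTo σ x t)
  | 0 => ⟨rfl, Mdl.add_rel_of_rel hx⟩
  | n + 1 => ⟨rfl, Mdl.add_rel_of_rel (pathTo_rel_of_rel σ x t ht (n + 1))⟩

end Paths

section NextDiamond
variable {S : Type} {M : Mdl S} {s : S} {n : ℕ} {φ : SCLF}

theorem sclSat_atom_iff (M : Mdl S) (u : S) (p : ℕ) :
    SCLSat (M, u) (.atom p) ↔ u ∈ M.val p := by
  simp only [SCLSat]

theorem sclSat_dia_nxt_of_strat {σ : Strat S} (hσ : IsAngelic σ) (hb : ABound σ n)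
    (hφ : ∀ u, SCLSat (M.add (σ (M, s)), u) φ) : SCLSat (M, s) (.dia n (.nxt φ)) := by
  refine ⟨σ, hσ, hb, fun π h0 hπ => ?_⟩
  obtain ⟨hmodel, -⟩ := hπ 0
  simp only [SCLPSat]
  rw [← Prod.mk.eta (p := π 1), hmodel, h0]
  exact hφ _

theorem sclSat_dia_nxt_of_forall (hφ : ∀ u, SCLSat (M.add ∅, u) φ) :
    SCLSat (M, s) (.dia n (.nxt φ)) :=
  sclSat_dia_nxt_of_strat (σ := fun _ => ∅) (fun _ => Set.empty_subset _)
    (fun π _ i => (π i).1.costLe_empty n) hφ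

theorem not_sclSat_dia_nxt {t : S} (hst : M.rel s t) (htt : M.rel t t)
    (hφ : ∀ A, ¬ SCLSat (M.add A, t) φ) : ¬ SCLSat (M, s) (.dia n (.nxt φ)) := by
  rintro ⟨σ, -, -, hall⟩
  exact hφ _ (hall (pathTo σ (M, s) t) rfl (aCompat_pathTo σ hst htt))

end NextDiamond

def addEdge {S : Type} (e : S × S) (n : ℕ) : Strat S :=
  fun Ms => {x | x = e ∧ ¬ Ms.1.rel e.1 e.2 ∧ Ms.1.cost e.1 e.2 ≤ n}

section AddEdge
variable {S : Type} (e : S × S) (n : ℕ)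

theorem isAngelic_addEdge : IsAngelic (addEdge e n) := by
  rintro Ms x ⟨rfl, hx, -⟩
  exact hx

theorem addEdge_eq_singleton {M : Mdl S} {s : S} (he : ¬ M.rel e.1 e.2)
    (hc : M.cost e.1 e.2 ≤ n) : addEdge e n (M, s) = {e} := by
  ext x
  simp [addEdge, he, hc]

theorem aBound_addEdge : ABound (addEdge e n) n := by
  intro π _ i
  by_cases h : ¬ (π i).1.rel e.1 e.2 ∧ (π i).1.cost e.1 e.2 ≤ n
  · rw [← Prod.mk.eta (p := π i), addEdge_eq_singleton e n h.1 h.2]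
    exact Mdl.costLe_singleton h.2
  · have hempty : addEdge e n (π i) = ∅ := Set.eq_empty_of_forall_notMem fun x hx => h hx.2
    rw [hempty]
    exact Mdl.costLe_empty _ n

end AddEdge

theorem M3_add_not_sclSat_dia_nxt_atom (s : Bool) :
    ¬ SCLSat (M3.add {(true, false)}, s) (.dia 0 (.nxt (.atom 0))) := by
  refine not_sclSat_dia_nxt (t := false) ?_ (Or.inl rfl) fun A => ?_
  · cases s
    · exact Or.inl rfl
    · exact Or.inr rfl
  · simp [sclSat_atom_iff, M3]

theorem M3_sclSat_sclWitness : SCLSat (M3, true) sclWitness := by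
  have hnew : addEdge (true, false) 1 (M3, true) = {(true, false)} :=
    addEdge_eq_singleton _ _ Bool.noConfusion le_rfl
  refine sclSat_dia_nxt_of_strat (isAngelic_addEdge (true, false) 1) (aBound_addEdge _ _)
    fun u => ?_
  rw [hnew]
  exact M3_add_not_sclSat_dia_nxt_atom u

theorem M4_not_sclSat_sclWitness : ¬ SCLSat (M4, ()) sclWitness :=
  not_sclSat_dia_nxt (t := ()) trivial trivial fun A hneg =>
    hneg (sclSat_dia_nxt_of_forall fun u => (sclSat_atom_iff _ u 0).2 rfl)

/-- `(M₃,s) ⊨ ⟨∠¹⟩X[∠⁰]X¬p` and `(M₄,s) ⊭ ⟨∠¹⟩X[∠⁰]X¬p`. -/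
theorem M3_sat_M4_not_sat :
    SCLSat (M3, true) sclWitness ∧ ¬ SCLSat (M4, ()) sclWitness :=
  ⟨M3_sclSat_sclWitness, M4_not_sclSat_sclWitness⟩
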